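/- Let n ∈ ℕ have binary expansion with lowest nonzero digit at position [n] and highest at position |n|, and suppose [n] ≠ |n|. Then for every x in the dyadic interval I_{[n]+1}(e_{[n]}) (points agreeing with e_{[n]} in the first [n]+1 coordinates), one has |D_n(x)| = |D_{n−2^{|n|}}(x)| ≥ 2^{[n]}/4. -/

import Mathlib

open MeasureTheory Finset ENNReal NNReal

noncomputable section

/-- The dyadic (Walsh) group `G = (ℤ/2)^ℕ`. -/
abbrev G : Type := ℕ → ZMod 2

/-- The dyadic interval `I_n(x)`: points agreeing with `x` in the first `n` coordinates. -/
def cyl (n : ℕ) (x : G) : Set G := {y : G | ∀ j < n, y j = x j}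

/-- The dyadic interval `I_n = I_n(0)`. -/
def Icyl (n : ℕ) : Set G := cyl n 0

/-- The `k`-th Rademacher function `r_k(x) = (-1)^{x_k}`. -/
def rad (k : ℕ) (x : G) : ℝ := (-1 : ℝ) ^ (x k).val

/-- The `n`-th Walsh function `w_n = ∏_k r_k^{n_k}`, `n_k` the binary digits of `n`. -/
def walsh (n : ℕ) (x : G) : ℝ :=
  ∏ k ∈ Finset.range n, if n.testBit k then rad k x else 1

/-- The `n`-th Walsh–Dirichlet kernel `D_n = ∑_{k<n} w_k`. -/
def dirichlet (n : ℕ) (x : G) : ℝ := ∑ k ∈ Finset.range n, walsh k x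

/-- `k`-th Walsh–Fourier coefficient of `f` with respect to the measure `μ`. -/
def coef (μ : Measure G) (f : G → ℝ) (k : ℕ) : ℝ := ∫ x, f x * walsh k x ∂μ

/-- `n`-th partial sum of the Walsh–Fourier series of `f`. -/
def psum (μ : Measure G) (n : ℕ) (f : G → ℝ) (x : G) : ℝ :=
  ∑ k ∈ Finset.range n, coef μ f k * walsh k x

/-- `|n|`: position of the highest nonzero binary digit of `n`. -/
def hi (n : ℕ) : ℕ := Nat.log 2 n

/-- `[n]`: position of the lowest nonzero binary digit of `n`. -/
def lo (n : ℕ) : ℕ := padicValNat 2 n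

/-- `ρ(n) = |n| - [n]`. -/
def rho (n : ℕ) : ℕ := hi n - lo n

/-- `e_m ∈ G`: the element with `m`-th coordinate `1` and all others `0`. -/
def eG (m : ℕ) : G := fun j => if j = m then 1 else 0

/-- `a` is a `p`-atom supported on the dyadic interval `I_M`. -/
def IsPAtom (μ : Measure G) (p : ℝ) (M : ℕ) (a : G → ℝ) : Prop :=
  Measurable a ∧ (∀ x, x ∉ Icyl M → a x = 0) ∧ (∫ x, a x ∂μ) = 0 ∧
    ∀ x, |a x| ≤ (2 : ℝ) ^ ((M : ℝ) / p)

/-- The hypothesis that `μ` is the Haar (fair-coin product) probability measure on `G`,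
characterized by its values on dyadic intervals. -/
def IsHaarG (μ : Measure G) : Prop := ∀ (n : ℕ) (x : G), μ (cyl n x) = 2⁻¹ ^ n

/-- The `p`-th power of the `H_p` quasi-norm: `∫ (sup_n |S_{2^n} f|)^p dμ`. -/
def HpP (μ : Measure G) (p : ℝ) (f : G → ℝ) : ℝ≥0∞ :=
  ∫⁻ x, (⨆ n : ℕ, ENNReal.ofReal |psum μ (2 ^ n) f x|) ^ p ∂μ

/-- The weighted maximal operator `sup_n |S_n f| / 2^{ρ(n)(1/p-1)}` (with values in `ℝ≥0∞`). -/
def maxW (μ : Measure G) (p : ℝ) (f : G → ℝ) (x : G) : ℝ≥0∞ :=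
  ⨆ n : ℕ, ENNReal.ofReal (|psum μ n f x| / 2 ^ ((rho n : ℝ) * (1 / p - 1)))

/-- The `p`-th power of the weak-`L_p` quasi-norm of a `ℝ≥0∞`-valued function. -/
def weakLpP (μ : Measure G) (p : ℝ) (g : G → ℝ≥0∞) : ℝ≥0∞ :=
  ⨆ t : ℝ≥0, (t : ℝ≥0∞) ^ p * μ {x | (t : ℝ≥0∞) < g x}

/-!
Splitting off the top binary digit gives `D_{2^m + i} = D_{2^m} + r_m D_i` for `i ≤ 2^m`, and
`D_{2^m}` is `2^m` times the indicator of `I_m`. If `x ∈ I_{[n]+1}(e_{[n]})` and `[n] < |n|`, then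
`x_{[n]} = 1` puts `x` outside `I_{|n|}`, so `|D_n(x)| = |D_{n - 2^{|n|}}(x)|`. Removing the top digit
does not change `[n]`, so iterating ends at `n = 2^{[n]}`, where `D_n(x) = 2^{[n]}` because
`x ∈ I_{[n]}`. Hence `|D_n(x)| = 2^{[n]}` exactly.
-/

lemma mem_Icyl_succ {k : ℕ} {x : G} : x ∈ Icyl (k + 1) ↔ x ∈ Icyl k ∧ x k = 0 := by
  simp only [Icyl, cyl, Set.mem_ofPred_eq, Pi.zero_apply, Nat.lt_succ_iff_lt_or_eq, or_imp,
    forall_and, forall_eq]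

lemma mem_cyl_succ_eG {l : ℕ} {x : G} : x ∈ cyl (l + 1) (eG l) ↔ x ∈ Icyl l ∧ x l = 1 := by
  simp only [Icyl, cyl, eG, Set.mem_ofPred_eq, Pi.zero_apply, Nat.lt_succ_iff_lt_or_eq, or_imp,
    forall_and, forall_eq, if_pos]
  refine and_congr (forall₂_congr fun j hj => ?_) Iff.rfl
  rw [if_neg hj.ne]

lemma notMem_Icyl_of_lt {l m : ℕ} {x : G} (hl : l < m) (hx : x l = 1) : x ∉ Icyl m :=
  fun h => one_ne_zero (hx ▸ h l hl)

lemma rad_eq_ite (k : ℕ) (x : G) : rad k x = if x k = 0 then 1 else -1 := by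
  unfold rad
  rcases (by decide : ∀ a : ZMod 2, a = 0 ∨ a = 1) (x k) with h | h <;> simp [h, ZMod.val_one]

lemma abs_rad (k : ℕ) (x : G) : |rad k x| = 1 := by
  simp [rad]

lemma walsh_eq_prod_range {n N : ℕ} (h : n < 2 ^ N) (x : G) :
    walsh n x = ∏ k ∈ Finset.range N, if n.testBit k then rad k x else 1 := by
  have extend : ∀ {N N' : ℕ}, n < 2 ^ N → N ≤ N' →
      ∏ k ∈ Finset.range N, (if n.testBit k then rad k x else 1) =
        ∏ k ∈ Finset.range N', if n.testBit k then rad k x else 1 := by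
    intro N N' hN hNN'
    refine Finset.prod_subset (Finset.range_subset_range.2 hNN') fun k _ hk => ?_
    have hk : N ≤ k := by simpa using hk
    rw [Nat.testBit_lt_two_pow (hN.trans_le (Nat.pow_le_pow_right two_pos hk)),
      if_neg Bool.false_ne_true]
  rcases le_total n N with hnN | hNn
  · exact extend Nat.lt_two_pow_self hnN
  · exact (extend h hNn).symm

lemma walsh_two_pow_add {m i : ℕ} (h : i < 2 ^ m) (x : G) :
    walsh (2 ^ m + i) x = rad m x * walsh i x := by
  have hlt : 2 ^ m + i < 2 ^ (m + 1) := by rw [pow_succ]; omega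
  rw [walsh_eq_prod_range hlt, walsh_eq_prod_range h, Finset.prod_range_succ, mul_comm,
    Nat.testBit_two_pow_add_eq, Nat.testBit_lt_two_pow h]
  congr 1
  exact Finset.prod_congr rfl fun k hk => by
    rw [Nat.testBit_two_pow_add_gt (Finset.mem_range.1 hk)]

lemma dirichlet_two_pow_add {m i : ℕ} (h : i ≤ 2 ^ m) (x : G) :
    dirichlet (2 ^ m + i) x = dirichlet (2 ^ m) x + rad m x * dirichlet i x := by
  rw [dirichlet, dirichlet, dirichlet, Finset.sum_range_add, Finset.mul_sum]
  congr 1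
  exact Finset.sum_congr rfl fun j hj => walsh_two_pow_add ((Finset.mem_range.1 hj).trans_le h) x

lemma dirichlet_two_pow (k : ℕ) (x : G) :
    dirichlet (2 ^ k) x = (Icyl k).indicator (fun _ => (2 : ℝ) ^ k) x := by
  induction k with
  | zero => simp [dirichlet, walsh, Icyl, cyl]
  | succ k ih =>
    rw [pow_succ, mul_two, dirichlet_two_pow_add le_rfl, ih, rad_eq_ite]
    by_cases hk : x k = 0 <;> by_cases hx : x ∈ Icyl k <;>
      simp [mem_Icyl_succ, hk, hx, ← mul_two, pow_succ]

lemma ne_zero_of_lo_ne_hi {n : ℕ} (h : lo n ≠ hi n) : n ≠ 0 := by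
  rintro rfl
  simp [lo, hi] at h

lemma lo_le_hi {n : ℕ} (hn : n ≠ 0) : lo n ≤ hi n :=
  Nat.le_log_of_pow_le one_lt_two (Nat.le_of_dvd (Nat.pos_of_ne_zero hn) pow_padicValNat_dvd)

lemma eq_two_pow_hi_of_lo_eq_hi {n : ℕ} (hn : n ≠ 0) (h : lo n = hi n) : n = 2 ^ hi n := by
  obtain ⟨k, hk⟩ : 2 ^ hi n ∣ n := h ▸ pow_padicValNat_dvd
  have hlt : 2 ^ hi n * k < 2 ^ hi n * 2 :=
    hk ▸ pow_succ 2 (hi n) ▸ Nat.lt_pow_succ_log_self one_lt_two n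
  have hk1 : k = 1 := by
    have : k < 2 := Nat.lt_of_mul_lt_mul_left hlt
    have : k ≠ 0 := by rintro rfl; exact hn (by simpa using hk)
    omega
  rw [hk1, mul_one] at hk
  exact hk

lemma sub_two_pow_hi_ne_zero {n : ℕ} (h : lo n ≠ hi n) : n - 2 ^ hi n ≠ 0 := by
  have hle : 2 ^ hi n ≤ n := Nat.pow_log_le_self 2 (ne_zero_of_lo_ne_hi h)
  intro h0
  apply h
  have hpow : n = 2 ^ hi n := by omega
  conv_lhs => rw [lo, hpow]
  exact padicValNat.prime_pow _

lemma lo_sub_two_pow_hi {n : ℕ} (h : lo n < hi n) : lo (n - 2 ^ hi n) = lo n := by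
  have hn := ne_zero_of_lo_ne_hi h.ne
  have hi0 := sub_two_pow_hi_ne_zero h.ne
  have hle : 2 ^ hi n ≤ n := Nat.pow_log_le_self 2 hn
  refine le_antisymm ((padicValNat_dvd_iff_le hn).1 ?_) ((padicValNat_dvd_iff_le hi0).1 ?_)
  · have hlo : lo (n - 2 ^ hi n) ≤ hi n :=
      (lo_le_hi hi0).trans (Nat.log_mono_right (Nat.sub_le n _))
    have hdvd : 2 ^ lo (n - 2 ^ hi n) ∣ n - 2 ^ hi n + 2 ^ hi n :=
      dvd_add pow_padicValNat_dvd (pow_dvd_pow 2 hlo)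
    rwa [Nat.sub_add_cancel hle] at hdvd
  · exact Nat.dvd_sub pow_padicValNat_dvd (pow_dvd_pow 2 h.le)

lemma abs_dirichlet_eq_sub_two_pow_hi {n : ℕ} {x : G} (h : lo n < hi n) (hx : x (lo n) = 1) :
    |dirichlet n x| = |dirichlet (n - 2 ^ hi n) x| := by
  have hle : 2 ^ hi n ≤ n := Nat.pow_log_le_self 2 (ne_zero_of_lo_ne_hi h.ne)
  have hlt : n < 2 ^ hi n * 2 := pow_succ 2 (hi n) ▸ Nat.lt_pow_succ_log_self one_lt_two n
  have hD : dirichlet (2 ^ hi n) x = 0 := by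
    rw [dirichlet_two_pow, Set.indicator_of_notMem (notMem_Icyl_of_lt h hx)]
  conv_lhs => rw [show n = 2 ^ hi n + (n - 2 ^ hi n) by omega]
  rw [dirichlet_two_pow_add (by omega), hD, zero_add, abs_mul, abs_rad, one_mul]

theorem abs_dirichlet_of_mem_cyl {n : ℕ} (hn : n ≠ 0) {x : G}
    (hx : x ∈ cyl (lo n + 1) (eG (lo n))) : |dirichlet n x| = 2 ^ lo n := by
  induction n using Nat.strong_induction_on with
  | _ n ih =>
  rcases (lo_le_hi hn).lt_or_eq with h | h
  · have hlo := lo_sub_two_pow_hi h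
    rw [abs_dirichlet_eq_sub_two_pow_hi h (mem_cyl_succ_eG.1 hx).2, ← hlo]
    exact ih _ (Nat.sub_lt (Nat.pos_of_ne_zero hn) (by positivity)) (sub_two_pow_hi_ne_zero h.ne)
      (hlo ▸ hx)
  · conv_lhs => rw [eq_two_pow_hi_of_lo_eq_hi hn h]
    rw [dirichlet_two_pow, Set.indicator_of_mem (h ▸ (mem_cyl_succ_eG.1 hx).1), h,
      abs_of_pos (by positivity)]

theorem stmt6_general (n : ℕ) (hne : lo n ≠ hi n) (x : G)
    (hx : x ∈ cyl (lo n + 1) (eG (lo n))) :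
    |dirichlet n x| = |dirichlet (n - 2 ^ hi n) x| ∧
      (2 : ℝ) ^ lo n / 4 ≤ |dirichlet n x| := by
  have hn := ne_zero_of_lo_ne_hi hne
  refine ⟨abs_dirichlet_eq_sub_two_pow_hi ((lo_le_hi hn).lt_of_ne hne)
    (mem_cyl_succ_eG.1 hx).2, ?_⟩
  rw [abs_dirichlet_of_mem_cyl hn hx]
  exact div_le_self (by positivity) (by norm_num)

/-- Lower estimate for the Dirichlet kernel: if `[n] ≠ |n|` then for all
`x ∈ I_{[n]+1}(e_{[n]})` one has `|D_n(x)| = |D_{n-2^{|n|}}(x)| ≥ 2^{[n]}/4`. -/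
theorem stmt6 (n : ℕ) (hn : 0 < n) (hne : lo n ≠ hi n) (x : G)
    (hx : x ∈ cyl (lo n + 1) (eG (lo n))) :
    |dirichlet n x| = |dirichlet (n - 2 ^ hi n) x| ∧
      (2 : ℝ) ^ lo n / 4 ≤ |dirichlet n x| :=
  stmt6_general n hne x hx

end
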